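/- arXiv:1411.5767 — 2 statements merged into one kernel-verified Lean document; each statement's English description precedes it below -/
import Mathlib

section
/- For fixed D with 0 ≤ D < 1/2, the region Φ_r(D) = {(a1,a2) ∈ [0,D]² : a1 + a2 - 2 a1 a2 ≤ D} is convex. -/
/-!
Under the affine substitution `u = 1 - 2 a₁`, `v = 1 - 2 a₂` one has
`1 - 2 (a₁ + a₂ - 2 a₁ a₂) = u v`, so on the box (where `u, v > 0` because `D < 1/2`) the
constraint becomes `u v ≥ 1 - 2D`. The region of the open positive quadrant above a branch of a
hyperbola is convex, by the AM-GM bound `u v' + u' v ≥ 2 √(u v u' v')` on the cross terms.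
-/

theorem two_mul_le_mul_add_mul_of_le_mul {c u v u' v' : ℝ} (hc : 0 ≤ c) (huv : c ≤ u * v)
    (huv' : c ≤ u' * v') (h : 0 ≤ u * v' + u' * v) : 2 * c ≤ u * v' + u' * v := by
  refine le_of_pow_le_pow_left₀ two_ne_zero h ?_
  calc (2 * c) ^ 2 = 4 * c * c := by ring
    _ ≤ 4 * (u * v) * (u' * v') := by gcongr; linarith
    _ = 4 * (u * v') * (u' * v) := by ring
    _ ≤ (u * v' + u' * v) ^ 2 := four_mul_le_sq_add _ _

theorem convex_setOf_le_mul_of_pos (c : ℝ) :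
    Convex ℝ {p : ℝ × ℝ | 0 < p.1 ∧ 0 < p.2 ∧ c ≤ p.1 * p.2} := by
  rintro ⟨u, v⟩ ⟨hu, hv, huv⟩ ⟨u', v'⟩ ⟨hu', hv', huv'⟩ a b ha hb hab
  dsimp only at hu hv huv hu' hv' huv'
  simp only [Set.mem_ofPred_eq, Prod.smul_mk, Prod.mk_add_mk, smul_eq_mul]
  refine ⟨convex_Ioi (0 : ℝ) hu hu' ha hb hab, convex_Ioi (0 : ℝ) hv hv' ha hb hab, ?_⟩
  rcases le_total c 0 with hc | hc
  · exact hc.trans (by positivity)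
  have cross := two_mul_le_mul_add_mul_of_le_mul hc huv huv' (by positivity)
  calc c = (a + b) ^ 2 * c := by rw [hab]; ring
    _ ≤ a ^ 2 * (u * v) + b ^ 2 * (u' * v') + a * b * (u * v' + u' * v) := by
      nlinarith [mul_nonneg ha hb]
    _ = (a * u + b * u') * (a * v + b * v') := by ring

theorem stmt3_general (D : ℝ) (hD : D < 1 / 2) :
    Convex ℝ {a : ℝ × ℝ | a.1 ∈ Set.Icc 0 D ∧ a.2 ∈ Set.Icc 0 D ∧
      a.1 + a.2 - 2 * a.1 * a.2 ≤ D} := by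
  let φ : ℝ × ℝ →ᵃ[ℝ] ℝ × ℝ :=
    AffineMap.const ℝ (ℝ × ℝ) (1, 1) - (2 : ℝ) • AffineMap.id ℝ (ℝ × ℝ)
  have hφ (a : ℝ × ℝ) : φ a = (1 - 2 * a.1, 1 - 2 * a.2) := by ext <;> simp [φ]
  have hΦ : {a : ℝ × ℝ | a.1 ∈ Set.Icc 0 D ∧ a.2 ∈ Set.Icc 0 D ∧
      a.1 + a.2 - 2 * a.1 * a.2 ≤ D} =
      Set.Icc 0 D ×ˢ Set.Icc 0 D ∩ φ ⁻¹' {p | 0 < p.1 ∧ 0 < p.2 ∧ 1 - 2 * D ≤ p.1 * p.2} := by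
    ext ⟨a₁, a₂⟩
    simp only [Set.mem_ofPred_eq, Set.mem_inter_iff, Set.mem_prod, Set.mem_preimage, hφ,
      Set.mem_Icc]
    constructor
    · rintro ⟨h₁, h₂, h⟩
      exact ⟨⟨h₁, h₂⟩, by linarith, by linarith, by linarith⟩
    · rintro ⟨⟨h₁, h₂⟩, -, -, h⟩
      exact ⟨h₁, h₂, by linarith⟩
  rw [hΦ]
  exact ((convex_Icc 0 D).prod (convex_Icc 0 D)).inter
    ((convex_setOf_le_mul_of_pos _).affine_preimage φ)

/-- For `0 ≤ D < 1/2`, the region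
`Φ_r(D) = {(a1, a2) ∈ [0,D]² : a1 + a2 - 2 a1 a2 ≤ D}` is convex. -/
theorem stmt3 (D : ℝ) (hD0 : 0 ≤ D) (hD : D < 1 / 2) :
    Convex ℝ {a : ℝ × ℝ | a.1 ∈ Set.Icc 0 D ∧ a.2 ∈ Set.Icc 0 D ∧
      a.1 + a.2 - 2 * a.1 * a.2 ≤ D} :=
  stmt3_general D hD
end

section
/- In the setting of the previous merging construction, if additionally E[ρ(X,Y) | Y = ȳ] ≤ E[ρ(X,Y) | Y = ỹ] for a distortion function ρ: 𝒳×𝒴 → [0,∞), then E[ρ(X̃, Ỹ)] ≤ E[ρ(X, Y)]. -/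
open Finset

/-- `p` is a probability mass function on a finite type. -/
def isPMF {Ω : Type*} [Fintype Ω] (p : Ω → ℝ) : Prop :=
  (∀ ω, 0 ≤ p ω) ∧ ∑ ω, p ω = 1

/-- Probability that the random variable `X` takes the value `x`. -/
noncomputable def prob {Ω α : Type*} [Fintype Ω] [DecidableEq α]
    (p : Ω → ℝ) (X : Ω → α) (x : α) : ℝ :=
  ∑ ω, if X ω = x then p ω else 0

/-- Shannon entropy of the random variable `X`. -/
noncomputable def ent {Ω α : Type*} [Fintype Ω] [Fintype α] [DecidableEq α]
    (p : Ω → ℝ) (X : Ω → α) : ℝ :=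
  -∑ x, prob p X x * Real.log (prob p X x)

/-- Conditional Shannon entropy `H(X|Y)`. -/
noncomputable def condEnt {Ω α β : Type*} [Fintype Ω] [Fintype α] [Fintype β]
    [DecidableEq α] [DecidableEq β] (p : Ω → ℝ) (X : Ω → α) (Y : Ω → β) : ℝ :=
  ent p (fun ω => (X ω, Y ω)) - ent p Y

/-- Mutual information `I(X;Y)`. -/
noncomputable def mutInfo {Ω α β : Type*} [Fintype Ω] [Fintype α] [Fintype β]
    [DecidableEq α] [DecidableEq β] (p : Ω → ℝ) (X : Ω → α) (Y : Ω → β) : ℝ :=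
  ent p X + ent p Y - ent p (fun ω => (X ω, Y ω))

/-- The Markov chain `X − U − Y`: `X` and `Y` are conditionally independent given `U`. -/
def markov {Ω α β γ : Type*} [Fintype Ω] [DecidableEq α] [DecidableEq β] [DecidableEq γ]
    (p : Ω → ℝ) (X : Ω → α) (U : Ω → β) (Y : Ω → γ) : Prop :=
  ∀ x u y, prob p (fun ω => (X ω, U ω, Y ω)) (x, u, y) * prob p U u =
    prob p (fun ω => (X ω, U ω)) (x, u) * prob p (fun ω => (U ω, Y ω)) (u, y)

/-! Merging moves the mass `p (x, y2)` from the cost `ρ x y2` to the cost `ρ x y1`, so the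
expected distortion changes by `∑ x, p (x, y2) * (ρ x y1 - ρ x y2)`. Because the posteriors at
`y1` and `y2` coincide, `∑ x, p (x, y2) * ρ x y1` equals `P(Y = y2) · E[ρ(X, Y) | Y = y1]`, which
the hypothesis on the conditional means bounds by `∑ x, p (x, y2) * ρ x y2`. -/

/-- The joint law of `(X̃, Ỹ)`. -/
def mergeMass {𝒳 𝒴 : Type*} [DecidableEq 𝒴] (p : 𝒳 × 𝒴 → ℝ) (y1 y2 : 𝒴) : 𝒳 × 𝒴 → ℝ :=
  fun z => if z.2 = y2 then 0 else if z.2 = y1 then p (z.1, y1) + p (z.1, y2) else p z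

theorem prob_id {Ω : Type*} [Fintype Ω] [DecidableEq Ω] (p : Ω → ℝ) (ω₀ : Ω) :
    prob p id ω₀ = p ω₀ := by
  simp [prob]

theorem mergeMass_apply {𝒳 𝒴 : Type*} [DecidableEq 𝒴]
    {p : 𝒳 × 𝒴 → ℝ} {y1 y2 : 𝒴} (hne : y1 ≠ y2) (x : 𝒳) (y : 𝒴) :
    mergeMass p y1 y2 (x, y) =
      p (x, y) + (if y = y1 then p (x, y2) else 0) - (if y = y2 then p (x, y2) else 0) := by
  unfold mergeMass
  split_ifs <;> simp_all

theorem sum_mergeMass_mul {𝒳 𝒴 : Type*} [Fintype 𝒳] [Fintype 𝒴] [DecidableEq 𝒴]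
    {p : 𝒳 × 𝒴 → ℝ} {y1 y2 : 𝒴} (hne : y1 ≠ y2) (ρ : 𝒳 → 𝒴 → ℝ) :
    ∑ z, mergeMass p y1 y2 z * ρ z.1 z.2 =
      ∑ z, p z * ρ z.1 z.2 + ∑ x, p (x, y2) * ρ x y1 - ∑ x, p (x, y2) * ρ x y2 := by
  simp only [Fintype.sum_prod_type, mergeMass_apply hne, add_mul, sub_mul, ite_mul, zero_mul,
    sum_add_distrib, sum_sub_distrib, sum_ite_eq', mem_univ, if_true]

theorem sum_mul_div_eq_of_div_eq {ι : Type*} (s : Finset ι) {a b f : ι → ℝ} {A B : ℝ}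
    (h : ∀ i, a i / A = b i / B) :
    (∑ i ∈ s, a i * f i) / A = (∑ i ∈ s, b i * f i) / B := by
  simp only [sum_div, mul_div_right_comm, h]

theorem stmt13_general {𝒳 𝒴 : Type*} [Fintype 𝒳] [Fintype 𝒴] [DecidableEq 𝒳] [DecidableEq 𝒴]
    (p : 𝒳 × 𝒴 → ℝ) (y1 y2 : 𝒴) (hne : y1 ≠ y2)
    (hy2 : 0 < prob p Prod.snd y2)
    (hcond : ∀ x : 𝒳,
      prob p id (x, y1) / prob p Prod.snd y1 = prob p id (x, y2) / prob p Prod.snd y2)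
    (ptil : 𝒳 × 𝒴 → ℝ)
    (hptil : ∀ x y, ptil (x, y) =
      if y = y2 then 0 else if y = y1 then p (x, y1) + p (x, y2) else p (x, y))
    (ρ : 𝒳 → 𝒴 → ℝ)
    (hmean : (∑ x, p (x, y1) * ρ x y1) / prob p Prod.snd y1 ≤
             (∑ x, p (x, y2) * ρ x y2) / prob p Prod.snd y2) :
    ∑ z : 𝒳 × 𝒴, ptil z * ρ z.1 z.2 ≤ ∑ z : 𝒳 × 𝒴, p z * ρ z.1 z.2 := by
  have hptil_eq : ptil = mergeMass p y1 y2 := funext fun ⟨x, y⟩ => hptil x y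
  have hposterior : ∀ x, p (x, y1) / prob p Prod.snd y1 = p (x, y2) / prob p Prod.snd y2 := by
    simpa only [prob_id] using hcond
  have hmoved : ∑ x, p (x, y2) * ρ x y1 ≤ ∑ x, p (x, y2) * ρ x y2 := by
    rw [← div_le_div_iff_of_pos_right hy2, ← sum_mul_div_eq_of_div_eq univ hposterior]
    exact hmean
  rw [hptil_eq, sum_mergeMass_mul hne]
  linarith

/-- In the merging construction (mass of `Ỹ` moved from `y2` to `y1`, identical
posteriors), if moreover `E[ρ(X,Y)|Y = y1] ≤ E[ρ(X,Y)|Y = y2]` for a distortion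
function `ρ ≥ 0`, then `E[ρ(X̃, Ỹ)] ≤ E[ρ(X, Y)]`. -/
theorem stmt13 {𝒳 𝒴 : Type*} [Fintype 𝒳] [Fintype 𝒴] [DecidableEq 𝒳] [DecidableEq 𝒴]
    (p : 𝒳 × 𝒴 → ℝ) (hp : isPMF p) (y1 y2 : 𝒴) (hne : y1 ≠ y2)
    (hy1 : 0 < prob p Prod.snd y1) (hy2 : 0 < prob p Prod.snd y2)
    (hcond : ∀ x : 𝒳,
      prob p id (x, y1) / prob p Prod.snd y1 = prob p id (x, y2) / prob p Prod.snd y2)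
    (ptil : 𝒳 × 𝒴 → ℝ)
    (hptil : ∀ x y, ptil (x, y) =
      if y = y2 then 0 else if y = y1 then p (x, y1) + p (x, y2) else p (x, y))
    (ρ : 𝒳 → 𝒴 → ℝ) (hρ : ∀ x y, 0 ≤ ρ x y)
    (hmean : (∑ x, p (x, y1) * ρ x y1) / prob p Prod.snd y1 ≤
             (∑ x, p (x, y2) * ρ x y2) / prob p Prod.snd y2) :
    ∑ z : 𝒳 × 𝒴, ptil z * ρ z.1 z.2 ≤ ∑ z : 𝒳 × 𝒴, p z * ρ z.1 z.2 :=
  stmt13_general p y1 y2 hne hy2 hcond ptil hptil ρ hmean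
end
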